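/- arXiv:2605.14342 — 2 statements merged into one kernel-verified Lean document; each statement's English description precedes it below -/
import Mathlib

section
/- Fibonomial Chu–Vandermonde identity: for all integers m, n ≥ 0 and k ≥ 0, the following holds in the real numbers: C(m+n, k)_F = Σ_{j=0}^{k} C(m, k−j)_F · C(n, j)_F · α^{n(k−j)} · β^{m j} · (−1)^{j(k−j)}. -/
/-!
Binet's formula gives `F (a + b) = φ ^ b * F a + ψ ^ a * F b` and its conjugate, hence two Pascal
rules `C(n+1, k+1) = φ^(k+1) C(n, k+1) + ψ^(n-k) C(n, k)` and `C(n+1, k+1) = ψ^(k+1) C(n, k+1) +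
φ^(n-k) C(n, k)`. Expanding the right-hand side for `(m + 1, n)` by the first rule and for
`(m, n + 1)` by the second produces the same main sum, and the remaining cross terms agree
termwise because `φ ψ = -1`. So the right-hand side depends only on `m + n`, and for `n = 0` it is
`C(m, k)`.
-/

/-- The Fibonomial coefficient `C(n,k)_F = ∏_{r=1}^{k} F_{n-r+1}/F_r`, as a real number.
It equals `0` when `k > n` and `1` when `k = 0`. -/
noncomputable def fibonomial (n k : ℕ) : ℝ :=
  ∏ r ∈ Finset.range k, (Nat.fib (n - r) : ℝ) / (Nat.fib (r + 1) : ℝ)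

open Finset Real goldenRatio

noncomputable def fibDescFactorial (n k : ℕ) : ℝ := ∏ r ∈ range k, (Nat.fib (n - r) : ℝ)

noncomputable def fibFactorial (k : ℕ) : ℝ := ∏ r ∈ range k, (Nat.fib (r + 1) : ℝ)

lemma fibonomial_eq_div (n k : ℕ) : fibonomial n k = fibDescFactorial n k / fibFactorial k :=
  prod_div_distrib _ _

lemma fibDescFactorial_succ (n k : ℕ) :
    fibDescFactorial n (k + 1) = fibDescFactorial n k * Nat.fib (n - k) :=
  prod_range_succ _ _

lemma succ_fibDescFactorial_succ (n k : ℕ) :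
    fibDescFactorial (n + 1) (k + 1) = Nat.fib (n + 1) * fibDescFactorial n k := by
  rw [fibDescFactorial, prod_range_succ', mul_comm]
  simp only [fibDescFactorial, Nat.sub_zero, Nat.add_sub_add_right]

lemma fibFactorial_succ (k : ℕ) : fibFactorial (k + 1) = fibFactorial k * Nat.fib (k + 1) :=
  prod_range_succ _ _

lemma fibFactorial_ne_zero (k : ℕ) : fibFactorial k ≠ 0 :=
  prod_ne_zero_iff.mpr fun r _ ↦ by exact_mod_cast (Nat.fib_pos.mpr r.succ_pos).ne'

lemma fibonomial_zero_right (n : ℕ) : fibonomial n 0 = 1 := prod_range_zero _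

lemma fibonomial_eq_zero_of_lt {n k : ℕ} (h : n < k) : fibonomial n k = 0 :=
  prod_eq_zero (mem_range.mpr h) (by simp)

lemma fibonomial_succ_succ_of_fib_add {x y : ℝ}
    (hfib : ∀ a b, (Nat.fib (a + b) : ℝ) = x ^ b * Nat.fib a + y ^ a * Nat.fib b) (n k : ℕ) :
    fibonomial (n + 1) (k + 1) =
      x ^ (k + 1) * fibonomial n (k + 1) + y ^ (n - k) * fibonomial n k := by
  rcases lt_or_ge n k with hnk | hkn
  · simp [fibonomial_eq_zero_of_lt, hnk, hnk.trans k.lt_succ_self]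
  have hsplit : (Nat.fib (n + 1) : ℝ) =
      x ^ (k + 1) * Nat.fib (n - k) + y ^ (n - k) * Nat.fib (k + 1) := by
    rw [← hfib, ← add_assoc, Nat.sub_add_cancel hkn]
  have hfact := fibFactorial_ne_zero k
  have hfib_succ : (Nat.fib (k + 1) : ℝ) ≠ 0 :=
    Nat.cast_ne_zero.mpr (Nat.fib_pos.mpr k.succ_pos).ne'
  simp only [fibonomial_eq_div, succ_fibDescFactorial_succ, fibDescFactorial_succ,
    fibFactorial_succ, hsplit]
  field_simp

lemma coe_fib_add (a b : ℕ) :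
    (Nat.fib (a + b) : ℝ) = φ ^ b * Nat.fib a + ψ ^ a * Nat.fib b := by
  simp only [coe_fib_eq, pow_add]
  ring

lemma fibonomial_succ_succ (n k : ℕ) :
    fibonomial (n + 1) (k + 1) =
      φ ^ (k + 1) * fibonomial n (k + 1) + ψ ^ (n - k) * fibonomial n k :=
  fibonomial_succ_succ_of_fib_add coe_fib_add n k

lemma fibonomial_succ_succ' (n k : ℕ) :
    fibonomial (n + 1) (k + 1) =
      ψ ^ (k + 1) * fibonomial n (k + 1) + φ ^ (n - k) * fibonomial n k :=
  fibonomial_succ_succ_of_fib_add (fun a b ↦ by rw [add_comm, coe_fib_add, add_comm]) n k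

lemma goldenRatio_mul_goldenConj_mul_neg_one_pow (r : ℕ) : (φ * ψ * (-1)) ^ r = 1 := by
  rw [goldenRatio_mul_goldenConj, neg_mul_neg, one_mul, one_pow]

/-- For `a = n`, `b = m` this is the right-hand side of the theorem, indexed by `i + j = k`; the
exponents `a`, `b` are separate parameters because the two Pascal rules shift them independently. -/
noncomputable def fibonomialConvolution (a b m n k : ℕ) : ℝ :=
  ∑ p ∈ antidiagonal k, fibonomial m p.1 * fibonomial n p.2 *
    φ ^ (a * p.1) * ψ ^ (b * p.2) * (-1) ^ (p.1 * p.2)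

lemma fibonomialConvolution_succ_left (a b m n k : ℕ) :
    fibonomialConvolution a b (m + 1) n (k + 1) = fibonomialConvolution (a + 1) b m n (k + 1) +
      ∑ p ∈ antidiagonal k, ψ ^ (m - p.1) * fibonomial m p.1 * fibonomial n p.2 *
        φ ^ (a * (p.1 + 1)) * ψ ^ (b * p.2) * (-1) ^ ((p.1 + 1) * p.2) := by
  rw [fibonomialConvolution, fibonomialConvolution, Nat.sum_antidiagonal_succ,
    Nat.sum_antidiagonal_succ, add_assoc, ← sum_add_distrib]
  congr 1
  refine sum_congr rfl fun p _ ↦ ?_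
  rw [fibonomial_succ_succ]
  ring

lemma fibonomialConvolution_succ_right (a b m n k : ℕ) :
    fibonomialConvolution a b m (n + 1) (k + 1) = fibonomialConvolution a (b + 1) m n (k + 1) +
      ∑ p ∈ antidiagonal k, φ ^ (n - p.2) * fibonomial m p.1 * fibonomial n p.2 *
        φ ^ (a * p.1) * ψ ^ (b * (p.2 + 1)) * (-1) ^ (p.1 * (p.2 + 1)) := by
  rw [fibonomialConvolution, fibonomialConvolution, Nat.sum_antidiagonal_succ',
    Nat.sum_antidiagonal_succ', add_assoc, ← sum_add_distrib]
  congr 1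
  refine sum_congr rfl fun p _ ↦ ?_
  rw [fibonomial_succ_succ']
  ring

lemma fibonomial_mul_fibonomial_cross_term_eq (m n i j : ℕ) :
    ψ ^ (m - i) * fibonomial m i * fibonomial n j *
        φ ^ (n * (i + 1)) * ψ ^ ((m + 1) * j) * (-1) ^ ((i + 1) * j) =
      φ ^ (n - j) * fibonomial m i * fibonomial n j *
        φ ^ ((n + 1) * i) * ψ ^ (m * (j + 1)) * (-1) ^ (i * (j + 1)) := by
  rcases lt_or_ge m i with hmi | him
  · simp [fibonomial_eq_zero_of_lt hmi]
  rcases lt_or_ge n j with hnj | hjn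
  · simp [fibonomial_eq_zero_of_lt hnj]
  obtain ⟨c, rfl⟩ := Nat.exists_eq_add_of_le him
  obtain ⟨d, rfl⟩ := Nat.exists_eq_add_of_le hjn
  rw [Nat.add_sub_cancel_left, Nat.add_sub_cancel_left]
  -- Both sides are a common monomial times `(φ ψ (-1)) ^ j`, resp. `(φ ψ (-1)) ^ i`.
  have key : (φ * ψ * (-1)) ^ j = (φ * ψ * (-1)) ^ i := by
    simp only [goldenRatio_mul_goldenConj_mul_neg_one_pow]
  -- `φ`, `ψ` are abbreviations, which `ring` would unfold.
  generalize φ = x, ψ = y at key ⊢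
  linear_combination x ^ (i * j + d * i + d) * y ^ (i * j + c * j + c) * (-1) ^ (i * j) *
    fibonomial (i + c) i * fibonomial (j + d) j * key

lemma fibonomialConvolution_shift (m n k : ℕ) :
    fibonomialConvolution n (m + 1) (m + 1) n k = fibonomialConvolution (n + 1) m m (n + 1) k := by
  cases k with
  | zero => simp [fibonomialConvolution, fibonomial_zero_right]
  | succ k =>
    rw [fibonomialConvolution_succ_left, fibonomialConvolution_succ_right]
    congr 1
    exact sum_congr rfl fun p _ ↦ fibonomial_mul_fibonomial_cross_term_eq m n p.1 p.2

lemma fibonomialConvolution_zero_right (m k : ℕ) :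
    fibonomialConvolution 0 m m 0 k = fibonomial m k := by
  cases k with
  | zero => simp [fibonomialConvolution, fibonomial_zero_right]
  | succ k =>
    simp [fibonomialConvolution, Nat.sum_antidiagonal_succ', fibonomial_zero_right,
      fibonomial_eq_zero_of_lt]

lemma fibonomial_add_eq_fibonomialConvolution (m n k : ℕ) :
    fibonomial (m + n) k = fibonomialConvolution n m m n k := by
  induction n generalizing m with
  | zero => exact (fibonomialConvolution_zero_right m k).symm
  | succ n ih => rw [← add_assoc, add_right_comm, ih, fibonomialConvolution_shift]

theorem fibonomial_chu_vandermonde (m n k : ℕ) :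
    fibonomial (m + n) k =
      ∑ j ∈ Finset.range (k + 1),
        fibonomial m (k - j) * fibonomial n j *
          ((1 + Real.sqrt 5) / 2) ^ (n * (k - j)) *
          ((1 - Real.sqrt 5) / 2) ^ (m * j) *
          (-1 : ℝ) ^ (j * (k - j)) := by
  rw [fibonomial_add_eq_fibonomialConvolution, fibonomialConvolution, ← Nat.sum_antidiagonal_swap]
  simp only [Prod.fst_swap, Prod.snd_swap]
  rw [Nat.sum_antidiagonal_eq_sum_range_succ (fun j i ↦ fibonomial m i * fibonomial n j *
      φ ^ (n * i) * ψ ^ (m * j) * (-1) ^ (i * j))]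
  simp only [mul_comm (k - _)]
end

section
/- For all integers n ≥ 0 and k ≥ 1: C(n+k, k)_F = Σ ((t_1+⋯+t_k)! / (t_1! ⋯ t_k!)) · (−1)^{k + Σ_{j=1}^{k} ((j+1)(j−2)/2) t_j} · ∏_{j=1}^{k} (C(n+1, j)_F)^{t_j}, where the sum ranges over all tuples (t_1, …, t_k) of nonnegative integers satisfying t_1 + 2t_2 + ⋯ + k t_k = k (note each (j+1)(j−2) is even, so the sign exponent is an integer). -/
open Finset

lemma choose_two_mul_two (m : ℕ) : m.choose 2 * 2 = m * (m - 1) := by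
  rw [Nat.choose_two_right, Nat.div_mul_cancel (Nat.even_mul_pred_self m).two_dvd]

lemma choose_two_succ (m : ℕ) : (m + 1).choose 2 = m + m.choose 2 := by
  simpa using Nat.choose_succ_succ' m 1

lemma add_two_mul_sub_one_ediv_two (j : ℕ) :
    ((j : ℤ) + 2) * ((j : ℤ) - 1) / 2 = ((j + 2).choose 2 : ℕ) - ((j : ℤ) + 2) := by
  have h := choose_two_mul_two (j + 2)
  zify at h
  rw [show ((j : ℤ) + 2) * ((j : ℤ) - 1) = 2 * (((j + 2).choose 2 : ℕ) - ((j : ℤ) + 2)) by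
    push_cast at h ⊢; linear_combination -h]
  exact Int.mul_ediv_cancel_left _ two_ne_zero

lemma cast_multinomial_eq_div {K ι : Type*} [Field K] [CharZero K] (s : Finset ι)
    (f : ι → ℕ) :
    (Nat.multinomial s f : K) =
      ((∑ i ∈ s, f i).factorial : K) / ∏ i ∈ s, ((f i).factorial : K) := by
  rw [Nat.multinomial, Nat.cast_div (Nat.prod_factorial_dvd_factorial_sum s f)
    (Nat.cast_ne_zero.2 (Nat.prod_factorial_pos s f).ne'),
    Nat.cast_prod]

section QBinom

variable {K : Type*} [Field K] (q : K)

/-- The Gaussian binomial coefficient; for `a < b` it vanishes through the factor `r = a`. -/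
def qBinom (a b : ℕ) : K :=
  ∏ r ∈ range b, (1 - q ^ (a - r)) / (1 - q ^ (r + 1))

@[simp]
lemma qBinom_zero_right (a : ℕ) : qBinom q a 0 = 1 := prod_range_zero _

lemma qBinom_eq_zero_of_lt {a b : ℕ} (h : a < b) : qBinom q a b = 0 :=
  prod_eq_zero (mem_range.2 h) (by simp)

lemma qBinom_succ_right (a b : ℕ) :
    qBinom q a (b + 1) = qBinom q a b * ((1 - q ^ (a - b)) / (1 - q ^ (b + 1))) :=
  prod_range_succ _ _

lemma qBinom_succ_succ_eq_mul (a b : ℕ) :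
    qBinom q (a + 1) (b + 1) = qBinom q a b * ((1 - q ^ (a + 1)) / (1 - q ^ (b + 1))) := by
  simp only [qBinom, prod_div_distrib]
  rw [prod_range_succ' (fun r => 1 - q ^ (a + 1 - r)), prod_range_succ _ b, mul_div_mul_comm]
  simp

lemma qBinom_succ_succ {b : ℕ} (hq : q ^ (b + 1) ≠ 1) (a : ℕ) :
    qBinom q (a + 1) (b + 1) = qBinom q a (b + 1) + q ^ (a - b) * qBinom q a b := by
  rcases lt_or_ge a b with h | h
  · simp [qBinom_eq_zero_of_lt q h, qBinom_eq_zero_of_lt q (h.trans b.lt_succ_self),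
      qBinom_eq_zero_of_lt q (Nat.succ_lt_succ h)]
  · have hb : 1 - q ^ (b + 1) ≠ 0 := sub_ne_zero.2 hq.symm
    have hpow : q ^ (a + 1) = q ^ (a - b) * q ^ (b + 1) := by rw [← pow_add]; congr 1; omega
    rw [qBinom_succ_succ_eq_mul, qBinom_succ_right, hpow]
    field_simp
    ring

lemma qBinom_self (hq : ∀ j, q ^ (j + 1) ≠ 1) (a : ℕ) : qBinom q a a = 1 := by
  induction a with
  | zero => simp
  | succ a ih => rw [qBinom_succ_succ q (hq a), qBinom_eq_zero_of_lt q a.lt_succ_self, ih]; simp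

end QBinom

section QSeries

open PowerSeries

variable {K : Type*} [Field K] (q : K)

lemma coeff_succ_one_sub_C_mul_X_mul (a : K) (f : K⟦X⟧) (m : ℕ) :
    coeff (m + 1) ((1 - C a * X) * f) = coeff (m + 1) f - a * coeff m f := by
  rw [sub_mul, one_mul, mul_assoc, map_sub, coeff_C_mul, coeff_succ_X_mul]

/-- `∏_{i=0}^{n} (1 - q^i X)`, by the `q`-binomial theorem. -/
def qElemSeries (n : ℕ) : K⟦X⟧ :=
  mk fun m => (-1) ^ m * q ^ m.choose 2 * qBinom q (n + 1) m

/-- `∏_{i=0}^{n} (1 - q^i X)⁻¹`. -/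
def qCompleteSeries (n : ℕ) : K⟦X⟧ :=
  mk fun j => qBinom q (n + j) j

variable {q}

lemma qElemSeries_zero (hq : ∀ j, q ^ (j + 1) ≠ 1) : qElemSeries q 0 = 1 - X := by
  ext (_ | _ | m)
  · simp [qElemSeries]
  · simp [qElemSeries, qBinom_self q hq, coeff_X]
  · simp [qElemSeries, qBinom_eq_zero_of_lt q (by omega : 1 < m + 2), coeff_X]

lemma qCompleteSeries_zero (hq : ∀ j, q ^ (j + 1) ≠ 1) :
    qCompleteSeries q 0 = PowerSeries.mk 1 := by
  ext j
  simp [qCompleteSeries, qBinom_self q hq]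

lemma qElemSeries_succ (hq : ∀ j, q ^ (j + 1) ≠ 1) (n : ℕ) :
    qElemSeries q (n + 1) = (1 - C (q ^ (n + 1)) * X) * qElemSeries q n := by
  ext (_ | m)
  · simp [qElemSeries]
  rw [coeff_succ_one_sub_C_mul_X_mul]
  simp only [qElemSeries, coeff_mk]
  rw [qBinom_succ_succ q (hq m)]
  rcases le_or_gt m (n + 1) with hm | hm
  · have hpow : q ^ (m + 1).choose 2 * q ^ (n + 1 - m) = q ^ (n + 1) * q ^ m.choose 2 := by
      rw [choose_two_succ, ← pow_add, ← pow_add]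
      congr 1
      omega
    linear_combination (-1) ^ (m + 1) * qBinom q (n + 1) m * hpow
  · simp [qBinom_eq_zero_of_lt q hm]

lemma one_sub_C_mul_X_mul_qCompleteSeries_succ (hq : ∀ j, q ^ (j + 1) ≠ 1) (n : ℕ) :
    (1 - C (q ^ (n + 1)) * X) * qCompleteSeries q (n + 1) = qCompleteSeries q n := by
  ext (_ | j)
  · simp [qCompleteSeries]
  rw [coeff_succ_one_sub_C_mul_X_mul]
  simp only [qCompleteSeries, coeff_mk]
  rw [show n + 1 + (j + 1) = n + 1 + j + 1 by ring, qBinom_succ_succ q (hq j),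
    show n + 1 + j - j = n + 1 by omega, show n + 1 + j = n + (j + 1) by ring]
  ring

theorem qElemSeries_mul_qCompleteSeries (hq : ∀ j, q ^ (j + 1) ≠ 1) (n : ℕ) :
    qElemSeries q n * qCompleteSeries q n = 1 := by
  induction n with
  | zero => rw [qElemSeries_zero hq, qCompleteSeries_zero hq, mul_comm, mk_one_mul_one_sub_eq_one]
  | succ n ih =>
    rw [qElemSeries_succ hq, mul_assoc, mul_left_comm,
      one_sub_C_mul_X_mul_qCompleteSeries_succ hq, ih]

theorem sum_qElem_mul_qComplete_eq_zero (hq : ∀ j, q ^ (j + 1) ≠ 1) (n : ℕ) {k : ℕ}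
    (hk : 1 ≤ k) :
    ∑ m ∈ range (k + 1), (-1) ^ m * q ^ m.choose 2 * qBinom q (n + 1) m *
      qBinom q (n + (k - m)) (k - m) = 0 := by
  have h := congrArg (coeff k) (qElemSeries_mul_qCompleteSeries hq n)
  rw [coeff_mul, Nat.sum_antidiagonal_eq_sum_range_succ (fun i j => coeff i _ * coeff j _),
    coeff_one, if_neg (by omega)] at h
  simpa only [qElemSeries, qCompleteSeries, coeff_mk] using h

end QSeries

section Recurrence

variable {R : Type*} [CommRing R]

lemma eq_of_recurrence (c : ℕ → R) {k : ℕ} {h h' : ℕ → R} (h0 : h 0 = h' 0)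
    (hrec : ∀ j, 1 ≤ j → j ≤ k → h j = ∑ m ∈ range j, c (m + 1) * h (j - (m + 1)))
    (hrec' : ∀ j, 1 ≤ j → j ≤ k →
      h' j = ∑ m ∈ range j, c (m + 1) * h' (j - (m + 1))) :
    ∀ j ≤ k, h j = h' j := by
  intro j
  induction j using Nat.strong_induction_on with
  | _ j ih =>
    intro hjk
    rcases Nat.eq_zero_or_pos j with rfl | hj
    · exact h0
    · rw [hrec j hj hjk, hrec' j hj hjk]
      exact sum_congr rfl fun m hm => by rw [ih _ (by simp at hm; omega) (by omega)]

lemma sum_le_of_sum_succ_mul_eq {k i : ℕ} {t : Fin k → ℕ}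
    (ht : ∑ j : Fin k, ((j : ℕ) + 1) * t j = i) : ∑ j, t j ≤ i :=
  ht ▸ sum_le_sum fun j _ => Nat.le_mul_of_pos_left _ j.val.succ_pos

lemma sum_range_sum_piAntidiag_eq_sum_fin {M : Type*} [AddCommMonoid M] (k : ℕ)
    (F : (Fin k → ℕ) → M) :
    ∑ s ∈ range (k + 1), ∑ t ∈ (piAntidiag univ s).filter
        (fun t : Fin k → ℕ => ∑ j : Fin k, ((j : ℕ) + 1) * t j = k), F t =
      ∑ t ∈ univ.filter
        (fun t : Fin k → Fin (k + 1) => ∑ j : Fin k, ((j : ℕ) + 1) * (t j : ℕ) = k),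
        F fun j => t j := by
  rw [← sum_fiberwise_of_maps_to (g := fun t : Fin k → Fin (k + 1) => ∑ j, (t j : ℕ))
    (t := range (k + 1)) fun t ht => mem_range.2 (Nat.lt_succ_of_le
      (sum_le_of_sum_succ_mul_eq (mem_filter.1 ht).2))]
  have hval {t : Fin k → ℕ} (ht : ∑ j : Fin k, ((j : ℕ) + 1) * t j = k) (j : Fin k) :
      (Fin.ofNat (k + 1) (t j) : ℕ) = t j :=
    Nat.mod_eq_of_lt (Nat.lt_succ_of_le ((single_le_sum (fun _ _ => Nat.zero_le _)
      (mem_univ j)).trans (sum_le_of_sum_succ_mul_eq ht)))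
  refine sum_congr rfl fun s _ => sum_nbij' (fun t j => Fin.ofNat (k + 1) (t j))
    (fun t j => (t j : ℕ)) ?_ ?_ ?_ ?_ ?_
  all_goals simp only [mem_filter, mem_univ, true_and, mem_piAntidiag, implies_true, and_true]
  · rintro t ⟨hs, ht⟩
    simp only [hval ht]
    exact ⟨ht, hs⟩
  · exact fun t ⟨ht, hs⟩ => ⟨hs, ht⟩
  · exact fun t ⟨_, ht⟩ => funext (hval ht)
  · exact fun t _ => funext fun j => Fin.ofNat_val_eq_self _
  · exact fun t ⟨_, ht⟩ => congrArg F (funext (hval ht)).symm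

open Polynomial

section GeomSum

variable {Q : R[X]}

lemma coeff_pow_eq_zero_of_X_dvd (hQ : X ∣ Q) {s i : ℕ} (h : i < s) : (Q ^ s).coeff i = 0 :=
  X_pow_dvd_iff.1 (pow_dvd_pow_of_dvd hQ s) i h

lemma geom_sum_eq_one_add_mul_sub_pow (Q : R[X]) (k : ℕ) :
    ∑ s ∈ range (k + 1), Q ^ s = 1 + Q * ∑ s ∈ range (k + 1), Q ^ s - Q ^ (k + 1) := by
  linear_combination geom_sum_mul_neg Q (k + 1)

lemma coeff_geom_sum_zero_of_X_dvd (hQ : X ∣ Q) (k : ℕ) :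
    (∑ s ∈ range (k + 1), Q ^ s).coeff 0 = 1 := by
  rw [geom_sum_eq_one_add_mul_sub_pow, coeff_sub, coeff_add, mul_coeff_zero, X_dvd_iff.1 hQ,
    coeff_pow_eq_zero_of_X_dvd hQ k.succ_pos]
  simp

lemma coeff_geom_sum_of_X_dvd (hQ : X ∣ Q) {k j : ℕ} (hj : 1 ≤ j) (hjk : j ≤ k) :
    (∑ s ∈ range (k + 1), Q ^ s).coeff j =
      ∑ m ∈ range j,
        Q.coeff (m + 1) * (∑ s ∈ range (k + 1), Q ^ s).coeff (j - (m + 1)) := by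
  set S := ∑ s ∈ range (k + 1), Q ^ s
  have hS : S = 1 + Q * S - Q ^ (k + 1) := geom_sum_eq_one_add_mul_sub_pow Q k
  conv_lhs => rw [hS]
  rw [coeff_sub, coeff_add, coeff_one, if_neg (by omega),
    coeff_pow_eq_zero_of_X_dvd hQ (by omega), coeff_mul,
    Nat.sum_antidiagonal_eq_sum_range_succ (fun a b => Q.coeff a * S.coeff b), sum_range_succ',
    X_dvd_iff.1 hQ]
  simp

end GeomSum

section TruncGenPoly

variable (c : ℕ → R) (k : ℕ)

noncomputable def truncGenPoly : R[X] := ∑ j : Fin k, C (c (j + 1)) * X ^ ((j : ℕ) + 1)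

lemma X_dvd_truncGenPoly : X ∣ truncGenPoly c k :=
  dvd_sum fun j _ => (dvd_pow_self X j.val.succ_ne_zero).mul_left _

lemma coeff_truncGenPoly {m : ℕ} (h1 : 1 ≤ m) (h2 : m ≤ k) :
    (truncGenPoly c k).coeff m = c m := by
  rw [truncGenPoly, finsetSum_coeff, sum_eq_single ⟨m - 1, by omega⟩]
  · rw [coeff_C_mul_X_pow, if_pos (by simp; omega), Nat.sub_add_cancel h1]
  · intro j _ hj
    rw [coeff_C_mul_X_pow, if_neg]
    exact fun h => hj (Fin.ext (by simp; omega))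
  · simp

lemma coeff_truncGenPoly_pow (s i : ℕ) :
    ((truncGenPoly c k) ^ s).coeff i =
      ∑ t ∈ (piAntidiag univ s).filter
          (fun t : Fin k → ℕ => ∑ j : Fin k, ((j : ℕ) + 1) * t j = i),
        (Nat.multinomial univ t : R) * ∏ j : Fin k, c (j + 1) ^ t j := by
  rw [truncGenPoly, sum_pow_eq_sum_piAntidiag, finsetSum_coeff, sum_filter]
  refine sum_congr rfl fun t _ => ?_
  simp_rw [mul_pow, ← C_pow, ← pow_mul, prod_mul_distrib, ← map_prod, prod_pow_eq_pow_sum,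
    ← C_eq_natCast, ← mul_assoc, ← C_mul, coeff_C_mul_X_pow, mul_comm _ (t _)]
  simp only [eq_comm]

end TruncGenPoly

theorem eq_sum_multinomial_mul_prod_of_recurrence (c h : ℕ → R) (h0 : h 0 = 1)
    (hrec : ∀ j, 1 ≤ j → h j = ∑ m ∈ range j, c (m + 1) * h (j - (m + 1))) (k : ℕ) :
    h k = ∑ t ∈ univ.filter
        (fun t : Fin k → Fin (k + 1) => ∑ j : Fin k, ((j : ℕ) + 1) * (t j : ℕ) = k),
      (Nat.multinomial univ (fun j => (t j : ℕ)) : R) *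
        ∏ j : Fin k, c (j + 1) ^ (t j : ℕ) := by
  have hQ := X_dvd_truncGenPoly c k
  have hcoeff : ∀ j ≤ k, h j = (∑ s ∈ range (k + 1), truncGenPoly c k ^ s).coeff j :=
    eq_of_recurrence c (h0.trans (coeff_geom_sum_zero_of_X_dvd hQ k).symm)
      (fun j hj _ => hrec j hj) fun j hj hjk => by
        rw [coeff_geom_sum_of_X_dvd hQ hj hjk]
        exact sum_congr rfl fun m hm => by
          rw [coeff_truncGenPoly c k (by omega) (by simp at hm; omega)]
  rw [hcoeff k le_rfl, finsetSum_coeff]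
  simp_rw [coeff_truncGenPoly_pow]
  exact sum_range_sum_piAntidiag_eq_sum_fin k _

end Recurrence

section GoldenRatio

open Real goldenRatio

lemma goldenConj_div_goldenRatio_pow_succ_ne_one (j : ℕ) : (ψ / φ) ^ (j + 1) ≠ 1 := by
  have hlt : |ψ / φ| < 1 := by
    rw [abs_div, abs_of_pos goldenRatio_pos, abs_of_neg goldenConj_neg,
      div_lt_one goldenRatio_pos]
    linarith [neg_one_lt_goldenConj, one_lt_goldenRatio]
  intro h
  have := pow_lt_one₀ (abs_nonneg _) hlt j.succ_ne_zero
  rw [← abs_pow, h, abs_one] at this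
  exact this.false

lemma goldenRatio_sq_mul_goldenConj_div_goldenRatio : φ ^ 2 * (ψ / φ) = -1 := by
  rw [sq, mul_assoc, mul_div_cancel₀ _ goldenRatio_ne_zero, goldenRatio_mul_goldenConj]

lemma coe_fib_eq_goldenRatio_pow_mul (m : ℕ) :
    (Nat.fib m : ℝ) = φ ^ m * (1 - (ψ / φ) ^ m) / √5 := by
  rw [coe_fib_eq, div_pow ψ φ m, mul_sub, mul_one,
    mul_div_cancel₀ _ (pow_ne_zero _ goldenRatio_ne_zero)]

lemma prod_range_goldenRatio_pow_div {a b : ℕ} (hb : b ≤ a) :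
    ∏ r ∈ range b, φ ^ (a - r) / φ ^ (r + 1) = φ ^ (b * (a - b)) := by
  have hrefl : ∏ r ∈ range b, φ ^ (r + 1) = ∏ r ∈ range b, φ ^ (b - r) := by
    rw [← prod_range_reflect]
    exact prod_congr rfl fun r hr => by rw [mem_range] at hr; congr 1; omega
  have hsplit :
      ∏ r ∈ range b, φ ^ (a - r) = φ ^ (b * (a - b)) * ∏ r ∈ range b, φ ^ (b - r) := by
    rw [mul_comm b, pow_mul, ← card_range b, ← prod_const, card_range, ← prod_mul_distrib]
    exact prod_congr rfl fun r hr => by rw [mem_range] at hr; rw [← pow_add]; congr 1; omega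
  rw [prod_div_distrib, hrefl, hsplit, mul_div_cancel_right₀]
  exact prod_ne_zero_iff.2 fun r _ => pow_ne_zero _ goldenRatio_ne_zero

theorem fibonomial_eq_goldenRatio_pow_mul_qBinom (a b : ℕ) :
    fibonomial a b = φ ^ (b * (a - b)) * qBinom (ψ / φ) a b := by
  rcases lt_or_ge a b with h | h
  · rw [qBinom_eq_zero_of_lt _ h, mul_zero]
    exact prod_eq_zero (mem_range.2 h) (by simp)
  · rw [← prod_range_goldenRatio_pow_div h, qBinom, fibonomial, ← prod_mul_distrib]
    refine prod_congr rfl fun r _ => ?_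
    rw [coe_fib_eq_goldenRatio_pow_mul, coe_fib_eq_goldenRatio_pow_mul,
      div_div_div_cancel_right₀ (by positivity), mul_div_mul_comm]

lemma neg_one_pow_mul_fibonomial_mul_fibonomial {n k m : ℕ} (hmk : m ≤ k) :
    (-1) ^ (m + 1).choose 2 * fibonomial (n + 1) m * fibonomial (n + (k - m)) (k - m) =
      φ ^ (k * n) * ((-1) ^ m * (ψ / φ) ^ m.choose 2 * qBinom (ψ / φ) (n + 1) m *
        qBinom (ψ / φ) (n + (k - m)) (k - m)) := by
  rw [fibonomial_eq_goldenRatio_pow_mul_qBinom, fibonomial_eq_goldenRatio_pow_mul_qBinom,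
    Nat.add_sub_cancel]
  rcases le_or_gt m (n + 1) with hmn | hmn
  · have hexp : k * n = m * (n + 1 - m) + (k - m) * n + m.choose 2 * 2 := by
      rw [choose_two_mul_two]
      rcases m with _ | m
      · simp
      · obtain ⟨l, rfl⟩ := Nat.exists_eq_add_of_le hmk
        obtain ⟨i, rfl⟩ := Nat.exists_eq_add_of_le (Nat.le_of_succ_le_succ hmn)
        simp only [Nat.add_sub_cancel_left, Nat.add_sub_cancel,
          show m + i + 1 - (m + 1) = i by omega]
        ring
    have hsign : (-1 : ℝ) ^ (m + 1).choose 2 = (-1) ^ m * (-1) ^ m.choose 2 := by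
      rw [choose_two_succ, pow_add]
    have hq : φ ^ (m.choose 2 * 2) * (ψ / φ) ^ m.choose 2 = (-1) ^ m.choose 2 := by
      rw [mul_comm _ 2, pow_mul, ← mul_pow, goldenRatio_sq_mul_goldenConj_div_goldenRatio]
    rw [hsign, hexp, pow_add, pow_add]
    linear_combination -(-1) ^ m * φ ^ (m * (n + 1 - m)) * φ ^ ((k - m) * n) *
      qBinom (ψ / φ) (n + 1) m * qBinom (ψ / φ) (n + (k - m)) (k - m) * hq
  · simp [qBinom_eq_zero_of_lt _ hmn]

theorem sum_neg_one_pow_mul_fibonomial_mul_fibonomial (n : ℕ) {k : ℕ} (hk : 1 ≤ k) :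
    ∑ m ∈ range (k + 1),
      (-1) ^ (m + 1).choose 2 * fibonomial (n + 1) m * fibonomial (n + (k - m)) (k - m) = 0 := by
  rw [sum_congr rfl fun m hm => neg_one_pow_mul_fibonomial_mul_fibonomial
      (Nat.le_of_lt_succ (mem_range.1 hm)), ← mul_sum,
    sum_qElem_mul_qComplete_eq_zero goldenConj_div_goldenRatio_pow_succ_ne_one n hk, mul_zero]

theorem fibonomial_add_self_eq_sum (n : ℕ) {j : ℕ} (hj : 1 ≤ j) :
    fibonomial (n + j) j = ∑ m ∈ range j,
      -((-1) ^ (m + 1 + 1).choose 2 * fibonomial (n + 1) (m + 1)) *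
        fibonomial (n + (j - (m + 1))) (j - (m + 1)) := by
  have h := sum_neg_one_pow_mul_fibonomial_mul_fibonomial n hj
  rw [sum_range_succ', Nat.sub_zero, zero_add, Nat.choose_eq_zero_of_lt one_lt_two, pow_zero,
    show fibonomial (n + 1) 0 = 1 from prod_range_zero _] at h
  simp only [neg_mul, sum_neg_distrib]
  linear_combination h

end GoldenRatio

lemma neg_one_zpow_sign_eq_prod {k : ℕ} {t : Fin k → ℕ}
    (ht : ∑ j : Fin k, ((j : ℕ) + 1) * t j = k) :
    (-1 : ℝ) ^ ((k : ℤ) +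
      ∑ j : Fin k, ((((j : ℕ) : ℤ) + 2) * (((j : ℕ) : ℤ) - 1) / 2) * (t j : ℤ)) =
      ∏ j : Fin k, (-(-1) ^ ((j : ℕ) + 1 + 1).choose 2) ^ t j := by
  have hexp :
      (k : ℤ) + ∑ j : Fin k, ((((j : ℕ) : ℤ) + 2) * (((j : ℕ) : ℤ) - 1) / 2) * (t j : ℤ) =
        ((∑ j : Fin k, (((j : ℕ) + 1 + 1).choose 2 + 1) * t j : ℕ) : ℤ) -
          2 * ∑ j, (t j : ℤ) := by
    have hk : (k : ℤ) = ∑ j : Fin k, (((j : ℕ) : ℤ) + 1) * (t j : ℤ) := by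
      exact_mod_cast ht.symm
    rw [hk, mul_sum]
    push_cast
    rw [← sum_add_distrib, ← sum_sub_distrib]
    refine sum_congr rfl fun j _ => ?_
    rw [add_two_mul_sub_one_ediv_two]
    ring
  simp_rw [hexp, neg_eq_neg_one_mul ((-1 : ℝ) ^ _), ← pow_succ', ← pow_mul,
    prod_pow_eq_pow_sum, zpow_sub₀ (by norm_num : (-1 : ℝ) ≠ 0), zpow_mul, zpow_natCast]
  norm_num

/- A tuple `(t_1, …, t_k)` is encoded as `t : Fin k → Fin (k+1)` (the weight condition
forces `t_j ≤ k`), with `t_j` stored at the index `(j : Fin k)` of value `j - 1`. -/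
theorem fibonomial_trudi_column_general (n k : ℕ) :
    fibonomial (n + k) k =
      ∑ t ∈ Finset.univ.filter
          (fun t : Fin k → Fin (k + 1) => ∑ j : Fin k, ((j : ℕ) + 1) * ((t j : ℕ)) = k),
        (((∑ j : Fin k, (t j : ℕ)).factorial : ℝ) / ∏ j : Fin k, ((t j : ℕ).factorial : ℝ)) *
          (-1 : ℝ) ^ ((k : ℤ) +
            ∑ j : Fin k, ((((j : ℕ) : ℤ) + 2) * (((j : ℕ) : ℤ) - 1) / 2) * ((t j : ℕ) : ℤ)) *
          ∏ j : Fin k, (fibonomial (n + 1) ((j : ℕ) + 1)) ^ (t j : ℕ) := by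
  rw [eq_sum_multinomial_mul_prod_of_recurrence
    (fun m => -((-1) ^ (m + 1).choose 2 * fibonomial (n + 1) m)) (fun j => fibonomial (n + j) j)
    (prod_range_zero _) (fun j hj => fibonomial_add_self_eq_sum n hj) k]
  refine sum_congr rfl fun t ht => ?_
  rw [cast_multinomial_eq_div, neg_one_zpow_sign_eq_prod (mem_filter.1 ht).2]
  simp only [← neg_mul, mul_pow, prod_mul_distrib, mul_assoc]

theorem fibonomial_trudi_column (n k : ℕ) (hk : 1 ≤ k) :
    fibonomial (n + k) k =
      ∑ t ∈ Finset.univ.filter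
          (fun t : Fin k → Fin (k + 1) => ∑ j : Fin k, ((j : ℕ) + 1) * ((t j : ℕ)) = k),
        (((∑ j : Fin k, (t j : ℕ)).factorial : ℝ) / ∏ j : Fin k, ((t j : ℕ).factorial : ℝ)) *
          (-1 : ℝ) ^ ((k : ℤ) +
            ∑ j : Fin k, ((((j : ℕ) : ℤ) + 2) * (((j : ℕ) : ℤ) - 1) / 2) * ((t j : ℕ) : ℤ)) *
          ∏ j : Fin k, (fibonomial (n + 1) ((j : ℕ) + 1)) ^ (t j : ℕ) :=
  fibonomial_trudi_column_general n k
end
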